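/- Let H be a complex Hilbert space and A, B ∈ B(H) with A∘B ≠ 0 and A∘B = λ • (B∘A) for some λ ∈ ℂ. If both A and B are self-adjoint, then λ = 1 or λ = −1. -/

import Mathlib

/-!
Taking adjoints turns `a * b = λ • (b * a)` into `b * a = conj λ • (a * b)`, so `λ ^ 2 = 1` as soon
as `λ` is real. For `λ ≠ -1`, `b * a` is a nonzero multiple of the self-adjoint element
`a * b + b * a`; since `a * b` and `b * a` have the same nonzero spectrum, multiplication by `λ`
maps the nonzero part of the real spectrum of `a * b + b * a` into itself, so `λ` is real.
-/

open ComplexConjugate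

theorem spectrum.mul_mem_of_mul_eq_smul_mul {𝕜 A : Type*} [Field 𝕜] [Ring A] [Algebra 𝕜 A]
    {x y s : A} {lam c r : 𝕜} (hlam : lam ≠ 0) (hc : c ≠ 0)
    (hxy : x * y = lam • (y * x)) (hyx : y * x = c • s)
    (hr : r ∈ spectrum 𝕜 s) (hr0 : r ≠ 0) : lam * r ∈ spectrum 𝕜 s := by
  have hlamc : lam * c ≠ 0 := mul_ne_zero hlam hc
  have h_xy : (lam * c) * r ∈ spectrum 𝕜 (x * y) \ {0} := by
    refine ⟨?_, by simpa using mul_ne_zero hlamc hr0⟩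
    rw [hxy, hyx, smul_smul]
    exact spectrum.smul_mem_smul_iff (r := Units.mk0 _ hlamc) |>.mpr hr
  rw [spectrum.nonzero_mul_comm, hyx, mul_comm lam c, mul_assoc] at h_xy
  exact spectrum.smul_mem_smul_iff (r := Units.mk0 _ hc) |>.mp h_xy.1

theorem IsSelfAdjoint.exists_mem_spectrum_ne_zero {A : Type*} [CStarAlgebra A] {s : A}
    (hs : IsSelfAdjoint s) (hs0 : s ≠ 0) : ∃ r ∈ spectrum ℂ s, r ≠ 0 := by
  by_contra! h
  exact hs0 <| CFC.eq_zero_of_spectrum_subset_zero (R := ℂ) s h hs.isStarNormal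

theorem IsSelfAdjoint.conj_eq_of_mul_eq_smul_mul {A : Type*} [CStarAlgebra A] {x y s : A}
    {lam c : ℂ} (hs : IsSelfAdjoint s) (hs0 : s ≠ 0) (hlam : lam ≠ 0) (hc : c ≠ 0)
    (hxy : x * y = lam • (y * x)) (hyx : y * x = c • s) : conj lam = lam := by
  obtain ⟨r, hr, hr0⟩ := hs.exists_mem_spectrum_ne_zero hs0
  have hlamr := spectrum.mul_mem_of_mul_eq_smul_mul hlam hc hxy hyx hr hr0
  have hr_im : r.im = 0 := hs.im_eq_zero_of_mem_spectrum hr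
  have hr_re : r.re ≠ 0 := fun h => hr0 (Complex.ext h hr_im)
  have h := hs.im_eq_zero_of_mem_spectrum hlamr
  rw [Complex.mul_im, hr_im, mul_zero, zero_add] at h
  exact Complex.conj_eq_iff_im.mpr ((mul_eq_zero.mp h).resolve_right hr_re)

theorem IsSelfAdjoint.eq_one_or_eq_neg_one_of_mul_eq_smul_mul {A : Type*} [CStarAlgebra A]
    {a b : A} {lam : ℂ} (ha : IsSelfAdjoint a) (hb : IsSelfAdjoint b) (hab : a * b ≠ 0)
    (h : a * b = lam • (b * a)) : lam = 1 ∨ lam = -1 := by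
  by_cases hneg : lam = -1
  · exact .inr hneg
  have hlam : lam ≠ 0 := by rintro rfl; exact hab (by simpa using h)
  have hlam1 : lam + 1 ≠ 0 := fun h' => hneg (eq_neg_of_add_eq_zero_left h')
  have hs : IsSelfAdjoint (a * b + b * a) := by
    simp [IsSelfAdjoint, star_mul, ha.star_eq, hb.star_eq, add_comm]
  have hba_eq : b * a = (lam + 1)⁻¹ • (a * b + b * a) := by
    have hsum : lam • (b * a) + b * a = (lam + 1) • (b * a) := by rw [add_smul, one_smul]
    rw [h, hsum, smul_smul, inv_mul_cancel₀ hlam1, one_smul]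
  have hs0 : a * b + b * a ≠ 0 := fun h0 => hab (by rw [h, hba_eq, h0, smul_zero, smul_zero])
  have hreal := hs.conj_eq_of_mul_eq_smul_mul hs0 hlam (inv_ne_zero hlam1) h hba_eq
  have hba : b * a = lam • (a * b) := by
    simpa [star_smul, ha.star_eq, hb.star_eq, hreal] using congrArg star h
  rw [hba, smul_smul] at h
  have hsq : lam * lam = 1 := by
    have h0 : (lam * lam - 1) • (a * b) = 0 := by rw [sub_smul, one_smul, ← h, sub_self]
    exact sub_eq_zero.mp ((smul_eq_zero.mp h0).resolve_right hab)
  exact mul_self_eq_one_iff.mp hsq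

/-- Brooke et al., part 2. If `A∘B ≠ 0`, `A∘B = λ • (B∘A)`,
and both `A` and `B` are self-adjoint, then `λ = 1` or `λ = -1`. -/
theorem comm_conditions_both_selfAdjoint
    {H : Type*} [NormedAddCommGroup H] [InnerProductSpace ℂ H] [CompleteSpace H]
    (A B : H →L[ℂ] H) (lam : ℂ)
    (hne : A ∘L B ≠ 0) (hcomm : A ∘L B = lam • (B ∘L A))
    (hA : IsSelfAdjoint A) (hB : IsSelfAdjoint B) :
    lam = 1 ∨ lam = -1 :=
  hA.eq_one_or_eq_neg_one_of_mul_eq_smul_mul hB hne hcomm
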